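/- arXiv:2109.09870 — 3 statements merged into one kernel-verified Lean document; each statement's English description precedes it below -/
import Mathlib

section
/- Let (B, g_B, ψ) be a complete Ricci-Hessian type manifold satisfying Eq. (SuffCondition2) with λ < 0 and μ ≥ 0, where μ is the constant with λf² + fΔf + (m-1)|∇f|² - f∇φ(f) = μ. If f ∈ L^∞(B), i.e. sup_B f < +∞, then no such manifold exists. (Proof: fΔ_ψf = μ - λf² + |∇f|² gives Δ_ψ f ≥ -λf > 0, contradicting the weak maximum principle at infinity applied to the bounded function f.) -/
/-- There is no complete Ricci-Hessian type manifold
`(B, g_B, ψ)` satisfying SuffCondition2 with `λ < 0` and `μ ≥ 0` (where `μ` is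
the constant with `λf² + fΔf + (m-1)|∇f|² - f∇φ(f) = μ`) whose parameter
function `f` is bounded (`f ∈ L^∞(B)`).

Encoding: `G u v = ⟨∇u,∇v⟩`, `Δ_ψ u = Δu - ⟨∇ψ,∇u⟩`; `hIdentity` is the
derived identity `fΔ_ψf = μ - λf² + |∇f|²`; `hWMP` is the weak maximum
principle at infinity for `Δ_ψ`, valid on such manifolds. -/
theorem no_ricci_hessian_type_expanding_with_bounded_warping
    (B : Type*) [Nonempty B] (T : Type*) [AddCommGroup T] [Module (B → ℝ) T]
    (Ric gB : T) (hess : (B → ℝ) → T)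
    (Δ : (B → ℝ) → (B → ℝ)) (G : (B → ℝ) → (B → ℝ) → (B → ℝ))
    (f φ ψ : B → ℝ) (m : ℕ) (hm : 0 < m) (lam c mu : ℝ) (hf : ∀ x, 0 < f x)
    (hψ : ψ = fun x => φ x - (m : ℝ) * Real.log (f x))
    (hRicciHessianType :
      Ric + hess φ - (fun x => (m : ℝ) / f x) • hess f = (fun _ : B => lam) • gB)
    (hSuffCondition2 : ∀ x,
      2 * lam * φ x - G φ φ x + Δ φ x + ((m : ℝ) / f x) * G φ f x = c)
    (hIdentity : ∀ x,
      f x * (Δ f x - G ψ f x) = mu - lam * (f x) ^ 2 + G f f x)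
    (hG_nonneg : ∀ x, 0 ≤ G f f x)
    (hlam : lam < 0) (hmu : 0 ≤ mu)
    (hbounded : BddAbove (Set.range f))
    (hWMP : ∀ u : B → ℝ, BddAbove (Set.range u) →
      ∀ ε : ℝ, 0 < ε → ∃ x, (⨆ y, u y) - ε ≤ u x ∧ Δ u x - G ψ u x ≤ ε) :
    False := by
  set S := ⨆ y, f y with hS
  have hx0 := Classical.arbitrary B
  have hSpos : 0 < S := lt_of_lt_of_le (hf hx0) (le_ciSup hbounded hx0)
  have hε : 0 < min (S / 2) (-lam * S / 4) := by
    apply lt_min (by linarith)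
    have : 0 < -lam := by linarith
    positivity
  obtain ⟨x, hx1, hx2⟩ := hWMP f hbounded _ hε
  have hfx : S / 2 ≤ f x := by
    have := min_le_left (S / 2) (-lam * S / 4)
    linarith
  have hfxpos := hf x
  have hkey : -lam * f x ≤ Δ f x - G ψ f x := by
    have hid := hIdentity x
    have h1 : -lam * (f x) ^ 2 ≤ f x * (Δ f x - G ψ f x) := by
      have := hG_nonneg x; nlinarith
    nlinarith
  have h2 : -lam * S / 4 < -lam * f x := by nlinarith
  have h3 := min_le_right (S / 2) (-lam * S / 4)
  linarith
end

section
/- Let (B, g_B, ψ) be a complete Ricci-Hessian type manifold satisfying Eq. (SuffCondition2) with λ > 0 and μ ≤ 0. If |∇ln f| ∈ L^∞(B), a contradiction arises: from Δ_ψ|∇ln f|² ≥ 2λ|∇ln f|² ≥ 0 and the weak maximum principle at infinity one gets λ·sup|∇ln f|² = 0, forcing f constant, which is impossible. Hence no such manifold exists with |∇ln f| bounded. -/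
/-!
By the Bochner-type identity, and since `μ ≤ 0`, the bounded function `u = |∇ln f|²` satisfies
`Δ_ψ u ≥ 2λ u`. At the almost-maximum points supplied by the weak maximum principle at infinity
this gives `2λ · sup u ≤ (1 + 2λ) ε` for every `ε > 0`, so `u ≡ 0` and `f` is a constant `k > 0`.
But then `0 = Δ_ψ ln f = (μ - λk²)/k² < 0`.
-/

open Real

theorem two_mul_le_of_bochner_identity {lam mu u H q F m L : ℝ}
    (hL : 1 / 2 * L = H - 2 * mu / F ^ 2 * u + lam * u + m / F ^ 2 * q ^ 2)
    (hH : 0 ≤ H) (hu : 0 ≤ u) (hmu : mu ≤ 0) (hm : 0 ≤ m) :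
    2 * lam * u ≤ L := by
  have hcurv : 2 * mu / F ^ 2 * u ≤ 0 :=
    mul_nonpos_of_nonpos_of_nonneg
      (div_nonpos_of_nonpos_of_nonneg (by linarith) (sq_nonneg F)) hu
  have hgrad : 0 ≤ m / F ^ 2 * q ^ 2 := by positivity
  linarith

theorem ciSup_nonpos_of_mul_le_of_almost_max {ι : Type*} {u Lu : ι → ℝ} {a : ℝ} (ha : 0 < a)
    (hle : ∀ x, a * u x ≤ Lu x)
    (hmax : ∀ ε, 0 < ε → ∃ x, (⨆ y, u y) - ε ≤ u x ∧ Lu x ≤ ε) :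
    (⨆ y, u y) ≤ 0 := by
  refine le_of_forall_pos_le_add fun δ hδ => ?_
  -- `ε` is chosen so that `a · sup u ≤ a · (u x + ε) ≤ (1 + a) ε = a δ`.
  obtain ⟨x, hsup, hLu⟩ := hmax (a * δ / (1 + a)) (by positivity)
  have hε : (1 + a) * (a * δ / (1 + a)) = a * δ := by field_simp
  have : a * (⨆ y, u y) ≤ a * δ := by nlinarith [hle x]
  linarith [le_of_mul_le_mul_left this ha]

theorem no_ricci_hessian_type_shrinking_with_bounded_grad_log_general
    (B : Type*) [Nonempty B]
    (Δ : (B → ℝ) → (B → ℝ)) (G : (B → ℝ) → (B → ℝ) → (B → ℝ))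
    (H2 : (B → ℝ) → (B → ℝ))
    (f ψ : B → ℝ) (m : ℕ) (lam mu : ℝ) (hf : ∀ x, 0 < f x)
    (hlam : 0 < lam) (hmu : mu ≤ 0)
    (hBochner_log : ∀ x,
      (1 / 2) * (Δ (G (fun y => Real.log (f y)) (fun y => Real.log (f y))) x
              - G ψ (G (fun y => Real.log (f y)) (fun y => Real.log (f y))) x)
        = H2 (fun y => Real.log (f y)) x
            - (2 * mu / (f x) ^ 2)
                * G (fun y => Real.log (f y)) (fun y => Real.log (f y)) x
            + lam * G (fun y => Real.log (f y)) (fun y => Real.log (f y)) x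
            + ((m : ℝ) / (f x) ^ 2)
                * (G (fun y => Real.log (f y)) f x) ^ 2)
    (hH2_nonneg : ∀ x, 0 ≤ H2 (fun y => Real.log (f y)) x)
    (hG_nonneg : ∀ x,
      0 ≤ G (fun y => Real.log (f y)) (fun y => Real.log (f y)) x)
    (hΔψ_log : ∀ x,
      Δ (fun y => Real.log (f y)) x - G ψ (fun y => Real.log (f y)) x
        = (mu - lam * (f x) ^ 2) / (f x) ^ 2)
    (hbounded : BddAbove
      (Set.range (G (fun y => Real.log (f y)) (fun y => Real.log (f y)))))
    (hWMP : ∀ u : B → ℝ, BddAbove (Set.range u) →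
      ∀ ε : ℝ, 0 < ε → ∃ x, (⨆ y, u y) - ε ≤ u x ∧ Δ u x - G ψ u x ≤ ε)
    (hGradZero :
      (∀ x, G (fun y => Real.log (f y)) (fun y => Real.log (f y)) x = 0) →
      ∃ k : ℝ, ∀ x, f x = k)
    (hΔ_const : ∀ a : ℝ, ∀ x, Δ (fun _ => a) x = 0)
    (hG_const : ∀ (a : ℝ) (v : B → ℝ) (x : B), G v (fun _ => a) x = 0) :
    False := by
  set u := G (fun y => log (f y)) (fun y => log (f y))
  have hdrift : ∀ x, 2 * lam * u x ≤ Δ u x - G ψ u x := fun x =>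
    two_mul_le_of_bochner_identity (hBochner_log x) (hH2_nonneg x) (hG_nonneg x) hmu
      (Nat.cast_nonneg m)
  have hsup : (⨆ y, u y) ≤ 0 :=
    ciSup_nonpos_of_mul_le_of_almost_max (by positivity) hdrift (hWMP u hbounded)
  obtain ⟨k, hk⟩ := hGradZero fun x =>
    le_antisymm ((le_ciSup hbounded x).trans hsup) (hG_nonneg x)
  obtain x₀ := Classical.arbitrary B
  have hk_pos : 0 < k := hk x₀ ▸ hf x₀
  have hlog_const : (fun y => log (f y)) = fun _ => log k := funext fun y => by rw [hk y]
  have hΔψ := hΔψ_log x₀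
  rw [hlog_const, hΔ_const, hG_const, hk x₀, sub_zero] at hΔψ
  have hnum : mu - lam * k ^ 2 < 0 := by nlinarith [mul_pos hlam (pow_pos hk_pos 2)]
  exact (div_neg_of_neg_of_pos hnum (by positivity)).ne hΔψ.symm

/-- There is no complete Ricci-Hessian type manifold
`(B, g_B, ψ)` satisfying SuffCondition2 with `λ > 0`, `μ ≤ 0` and
`|∇ln f| ∈ L^∞(B)`: from `Δ_ψ|∇ln f|² ≥ 2λ|∇ln f|²` and the weak maximum
principle at infinity one gets `λ·sup|∇ln f|² = 0`, forcing `f` constant,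
which is impossible when `λ > 0` and `μ ≤ 0`.

Encoding as before; `hBochner_log` is the Bochner-type identity of Lemma 4(2),
`hΔψ_log` the identity `Δ_ψ(ln f) = (μ - λf²)/f²`, `hWMP` the weak maximum
principle at infinity for `Δ_ψ`, `hGradZero` the fact that `∇ln f ≡ 0` forces
`f` constant. -/
theorem no_ricci_hessian_type_shrinking_with_bounded_grad_log
    (B : Type*) [Nonempty B] (T : Type*) [AddCommGroup T] [Module (B → ℝ) T]
    (Ric gB : T) (hess : (B → ℝ) → T)
    (Δ : (B → ℝ) → (B → ℝ)) (G : (B → ℝ) → (B → ℝ) → (B → ℝ))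
    (H2 : (B → ℝ) → (B → ℝ))
    (f φ ψ : B → ℝ) (m : ℕ) (hm : 0 < m) (lam c mu : ℝ) (hf : ∀ x, 0 < f x)
    (hψ : ψ = fun x => φ x - (m : ℝ) * Real.log (f x))
    (hRicciHessianType :
      Ric + hess φ - (fun x => (m : ℝ) / f x) • hess f = (fun _ : B => lam) • gB)
    (hSuffCondition2 : ∀ x,
      2 * lam * φ x - G φ φ x + Δ φ x + ((m : ℝ) / f x) * G φ f x = c)
    (hSuffCondition3 : ∀ x,
      lam * (f x) ^ 2 + f x * Δ f x + ((m : ℝ) - 1) * G f f x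
        - f x * G φ f x = mu)
    (hlam : 0 < lam) (hmu : mu ≤ 0)
    (hBochner_log : ∀ x,
      (1 / 2) * (Δ (G (fun y => Real.log (f y)) (fun y => Real.log (f y))) x
              - G ψ (G (fun y => Real.log (f y)) (fun y => Real.log (f y))) x)
        = H2 (fun y => Real.log (f y)) x
            - (2 * mu / (f x) ^ 2)
                * G (fun y => Real.log (f y)) (fun y => Real.log (f y)) x
            + lam * G (fun y => Real.log (f y)) (fun y => Real.log (f y)) x
            + ((m : ℝ) / (f x) ^ 2)
                * (G (fun y => Real.log (f y)) f x) ^ 2)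
    (hH2_nonneg : ∀ x, 0 ≤ H2 (fun y => Real.log (f y)) x)
    (hG_nonneg : ∀ x,
      0 ≤ G (fun y => Real.log (f y)) (fun y => Real.log (f y)) x)
    (hΔψ_log : ∀ x,
      Δ (fun y => Real.log (f y)) x - G ψ (fun y => Real.log (f y)) x
        = (mu - lam * (f x) ^ 2) / (f x) ^ 2)
    (hbounded : BddAbove
      (Set.range (G (fun y => Real.log (f y)) (fun y => Real.log (f y)))))
    (hWMP : ∀ u : B → ℝ, BddAbove (Set.range u) →
      ∀ ε : ℝ, 0 < ε → ∃ x, (⨆ y, u y) - ε ≤ u x ∧ Δ u x - G ψ u x ≤ ε)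
    (hGradZero :
      (∀ x, G (fun y => Real.log (f y)) (fun y => Real.log (f y)) x = 0) →
      ∃ k : ℝ, ∀ x, f x = k)
    (hΔ_const : ∀ a : ℝ, ∀ x, Δ (fun _ => a) x = 0)
    (hG_const : ∀ (a : ℝ) (v : B → ℝ) (x : B), G v (fun _ => a) x = 0) :
    False :=
  no_ricci_hessian_type_shrinking_with_bounded_grad_log_general B Δ G H2 f ψ m lam mu hf hlam hmu
    hBochner_log hH2_nonneg hG_nonneg hΔψ_log hbounded hWMP hGradZero hΔ_const hG_const
end

section
/- Let (B, g_B, ψ) be a complete Ricci-Hessian type manifold satisfying Eq. (SuffCondition2) with λ = 0 and μ ≤ 0, and suppose |∇ln f| is constant on B. Then from the identity (1/2)Δ_ψ|∇ln f|² = |∇²ln f|² - (2μ/f²)|∇ln f|² + (m/f²)⟨∇ln f,∇f⟩² it follows that |∇ln f| = 0, hence f is constant. -/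
/-- Proposition 4, key step. Let `(B, g_B, ψ)` be a complete
Ricci-Hessian type manifold satisfying SuffCondition2 with `λ = 0` and `μ ≤ 0`,
and suppose `|∇ln f|` is constant on `B`. Then from
`(1/2)Δ_ψ|∇ln f|² = |∇²ln f|² - (2μ/f²)|∇ln f|² + (m/f²)⟨∇ln f,∇f⟩²`
(each right-hand term being nonnegative while the left side vanishes) it
follows that `|∇ln f| = 0`, hence `f` is constant.

Encoding as before; `hG_lf` is the chain rule `⟨∇ln f, ∇f⟩ = f·|∇ln f|²`,
`hΔψ_const` records that the `ψ`-Laplacian of a constant function vanishes,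
and `hGradZero` that vanishing of `∇ln f` forces `f` constant. -/
theorem warping_constant_steady_ricci_hessian_type
    (B : Type*) [Nonempty B] (T : Type*) [AddCommGroup T] [Module (B → ℝ) T]
    (Ric gB : T) (hess : (B → ℝ) → T)
    (Δ : (B → ℝ) → (B → ℝ)) (G : (B → ℝ) → (B → ℝ) → (B → ℝ))
    (H2 : (B → ℝ) → (B → ℝ))
    (f φ ψ : B → ℝ) (m : ℕ) (hm : 0 < m) (lam c mu : ℝ) (hf : ∀ x, 0 < f x)
    (hψ : ψ = fun x => φ x - (m : ℝ) * Real.log (f x))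
    (hRicciHessianType :
      Ric + hess φ - (fun x => (m : ℝ) / f x) • hess f = (fun _ : B => lam) • gB)
    (hSuffCondition2 : ∀ x,
      2 * lam * φ x - G φ φ x + Δ φ x + ((m : ℝ) / f x) * G φ f x = c)
    (hSuffCondition3 : ∀ x,
      lam * (f x) ^ 2 + f x * Δ f x + ((m : ℝ) - 1) * G f f x
        - f x * G φ f x = mu)
    (hlam : lam = 0) (hmu : mu ≤ 0)
    (hBochner_log : ∀ x,
      (1 / 2) * (Δ (G (fun y => Real.log (f y)) (fun y => Real.log (f y))) x
              - G ψ (G (fun y => Real.log (f y)) (fun y => Real.log (f y))) x)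
        = H2 (fun y => Real.log (f y)) x
            - (2 * mu / (f x) ^ 2)
                * G (fun y => Real.log (f y)) (fun y => Real.log (f y)) x
            + lam * G (fun y => Real.log (f y)) (fun y => Real.log (f y)) x
            + ((m : ℝ) / (f x) ^ 2)
                * (G (fun y => Real.log (f y)) f x) ^ 2)
    (hH2_nonneg : ∀ x, 0 ≤ H2 (fun y => Real.log (f y)) x)
    (hG_nonneg : ∀ x,
      0 ≤ G (fun y => Real.log (f y)) (fun y => Real.log (f y)) x)
    (hG_lf : ∀ x, G (fun y => Real.log (f y)) f x
      = f x * G (fun y => Real.log (f y)) (fun y => Real.log (f y)) x)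
    (hConst : ∃ a : ℝ, ∀ x,
      G (fun y => Real.log (f y)) (fun y => Real.log (f y)) x = a)
    (hΔψ_const : ∀ u : B → ℝ, (∃ a : ℝ, ∀ x, u x = a) →
      ∀ x, Δ u x - G ψ u x = 0)
    (hGradZero :
      (∀ x, G (fun y => Real.log (f y)) (fun y => Real.log (f y)) x = 0) →
      ∃ k : ℝ, ∀ x, f x = k) :
    ∃ k : ℝ, ∀ x, f x = k := by
  obtain ⟨a, ha⟩ := hConst
  obtain ⟨x⟩ := ‹Nonempty B›
  have hz := hΔψ_const _ ⟨a, ha⟩ x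
  have hb := hBochner_log x
  rw [hz, hlam, hG_lf x, ha x] at hb
  have hfx := hf x
  have hH := hH2_nonneg x
  have hmupos : 0 ≤ -(2 * mu / (f x) ^ 2) * a := by
    apply mul_nonneg
    · rw [neg_nonneg]
      exact div_nonpos_of_nonpos_of_nonneg (by linarith) (by positivity)
    · exact (ha x ▸ hG_nonneg x)
  have hterm : 0 ≤ ((m : ℝ) / (f x) ^ 2) * (f x * a) ^ 2 := by positivity
  have hma : ((m : ℝ) / (f x) ^ 2) * (f x * a) ^ 2 = 0 := by nlinarith
  have ha0 : a = 0 := by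
    have hm' : (0:ℝ) < m := by exact_mod_cast hm
    have : (f x * a) ^ 2 = 0 := by
      have h1 : (0:ℝ) < (m : ℝ) / (f x) ^ 2 := by positivity
      nlinarith [sq_nonneg (f x * a)]
    have := pow_eq_zero_iff (n := 2) (by norm_num) |>.mp this
    rcases mul_eq_zero.mp this with h | h
    · exact absurd h (ne_of_gt hfx)
    · exact h
  exact hGradZero fun y => (ha y).trans ha0
end
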